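/- arXiv:0709.0099 — 3 statements merged into one kernel-verified Lean document; each statement's English description precedes it below -/
import Mathlib

section
/- If every AGW graph with at least two vertices and outdegree k ≥ 2 admits a coloring for which some pair of distinct states is stable, then every AGW graph has a synchronizing coloring. -/
/-- A directed cycle in the multigraph `E`: a nonempty list of distinct vertices,
consecutive vertices joined by edges, and an edge from the last back to the first. -/
def IsCycle {V : Type} (E : V → Multiset V) (l : List V) : Prop :=
  ∃ h : l ≠ [], l.Nodup ∧ l.Chain' (fun a b => b ∈ E a) ∧ l.head h ∈ E (l.getLast h)

/-- An AGW graph: constant outdegree `k`, strongly connected, and the gcd of the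
lengths of all directed cycles is 1 (every common divisor of cycle lengths is 1). -/
def IsAGW {V : Type} (E : V → Multiset V) (k : ℕ) : Prop :=
  (∀ v, Multiset.card (E v) = k) ∧
  (∀ u v : V, Relation.ReflTransGen (fun a b => b ∈ E a) u v) ∧
  (∀ d : ℕ, (∀ l : List V, IsCycle E l → d ∣ l.length) → d = 1)

/-- A coloring of the multigraph: for every vertex `v` the multiset of images
`{δ a v : a ∈ Fin k}` (with multiplicity) equals `E v`. -/
def IsColoring {V : Type} [Fintype V] {k : ℕ} (E : V → Multiset V)
    (δ : Fin k → V → V) : Prop :=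
  ∀ v, Multiset.map (fun a => δ a v) (Finset.univ : Finset (Fin k)).val = E v

/-- The map `δ_s` of a word `s`: apply the letters of `s` from left to right. -/
def wordMap {V : Type} {k : ℕ} (δ : Fin k → V → V) (s : List (Fin k)) (v : V) : V :=
  s.foldl (fun x a => δ a x) v

/-- A pair of states is synchronizing if some word maps them to the same state. -/
def SyncPair {V : Type} {k : ℕ} (δ : Fin k → V → V) (p q : V) : Prop :=
  ∃ s : List (Fin k), wordMap δ s p = wordMap δ s q

/-- A pair is stable if all of its images under words are equal or synchronizing. -/
def Stable {V : Type} {k : ℕ} (δ : Fin k → V → V) (p q : V) : Prop :=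
  ∀ u : List (Fin k), SyncPair δ (wordMap δ u p) (wordMap δ u q)

/-- A word is synchronizing if it maps the whole state set to a single state. -/
def IsSynchronizingWord {V : Type} {k : ℕ} (δ : Fin k → V → V) (s : List (Fin k)) : Prop :=
  ∃ q : V, ∀ v : V, wordMap δ s v = q

/-- An F-clique: an image `V·s` of the whole state set in which every pair of
distinct states is a deadlock (not synchronizing). -/
def IsFClique {V : Type} [Fintype V] [DecidableEq V] {k : ℕ}
    (δ : Fin k → V → V) (F : Finset V) : Prop :=
  (∃ s : List (Fin k), F = Finset.image (wordMap δ s) Finset.univ) ∧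
  ∀ p ∈ F, ∀ q ∈ F, p ≠ q → ¬ SyncPair δ p q

/-- A weight function: positive and a left eigenvector of the adjacency matrix
(multiplicities of edges) with eigenvalue `k`. -/
def IsWeight {V : Type} [Fintype V] [DecidableEq V] (E : V → Multiset V) (k : ℕ)
    (w : V → ℕ) : Prop :=
  (∀ v, 1 ≤ w v) ∧ ∀ q, (∑ p, w p * (E p).count q) = k * w q

/-- The weight of a set of vertices. -/
def weight {V : Type} (w : V → ℕ) (D : Finset V) : ℕ := ∑ p ∈ D, w p

/-- `D` is mapped to a single state by some word. -/
def IsSyncSet {V : Type} [Fintype V] [DecidableEq V] {k : ℕ} (δ : Fin k → V → V)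
    (D : Finset V) : Prop :=
  ∃ s : List (Fin k), (D.image (wordMap δ s)).card = 1

/-- An F-maximal set: a set mapped to a single state by some word, of maximal weight. -/
def IsFMaximal {V : Type} [Fintype V] [DecidableEq V] {k : ℕ} (δ : Fin k → V → V)
    (w : V → ℕ) (D : Finset V) : Prop :=
  IsSyncSet δ D ∧ ∀ D' : Finset V, IsSyncSet δ D' → weight w D' ≤ weight w D

/-- `w*`: the maximal weight of a set mapped to a single state by some word. -/
noncomputable def wstar {V : Type} [Fintype V] [DecidableEq V] {k : ℕ}
    (δ : Fin k → V → V) (w : V → ℕ) : ℕ :=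
  sSup {m | ∃ D : Finset V, IsSyncSet δ D ∧ weight w D = m}

/-- A spanning subgraph: a choice of one outgoing edge of every vertex. -/
def IsSpanning {V : Type} (E : V → Multiset V) (f : V → V) : Prop :=
  ∀ v, f v ∈ E v

/-- The level of a vertex: the least `m` such that `f^[m] v` is `f`-periodic. -/
noncomputable def level {V : Type} (f : V → V) (v : V) : ℕ :=
  sInf {m | ∃ n > 0, f^[n] (f^[m] v) = f^[m] v}

/-- The root of a vertex: its image on the cycle reached along its tree. -/
noncomputable def root {V : Type} (f : V → V) (v : V) : V :=
  f^[level f v] v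


/-!
Stability of pairs is a congruence of the automaton. Factoring a coloring with a stable pair of
distinct states by it gives an automaton on fewer states whose underlying graph is again AGW
(an original cycle projects to a closed walk, and closed walks decompose into cycles). By induction
the quotient graph has a synchronizing coloring; permuting the letters at each state lifts it to a
coloring of the original graph in which every word of the old coloring can still be simulated
inside a class. So states of one class stay stable, a word collapsing the quotient maps all states
into one class, and a finite set of pairwise stable states is merged one pair at a time.
-/

section Words

variable {V W : Type} {k : ℕ}

lemma wordMap_cons (δ : Fin k → V → V) (a : Fin k) (s : List (Fin k)) (v : V) :
    wordMap δ (a :: s) v = wordMap δ s (δ a v) := rfl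

lemma wordMap_append (δ : Fin k → V → V) (s t : List (Fin k)) (v : V) :
    wordMap δ (s ++ t) v = wordMap δ t (wordMap δ s v) :=
  List.foldl_append

lemma wordMap_semiconj {δ : Fin k → V → V} {δ' : Fin k → W → W} {π : V → W}
    (hπ : ∀ a v, π (δ a v) = δ' a (π v)) (s : List (Fin k)) (v : V) :
    π (wordMap δ s v) = wordMap δ' s (π v) := by
  induction s generalizing v with
  | nil => rfl
  | cons a s ih => simp only [wordMap_cons, ih, hπ]

end Words

namespace Stable

variable {V : Type} {k : ℕ} {δ : Fin k → V → V} {p q r : V}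

lemma refl (δ : Fin k → V → V) (p : V) : Stable δ p p := fun _ => ⟨[], rfl⟩

lemma symm (h : Stable δ p q) : Stable δ q p := fun u => (h u).imp fun _ hs => hs.symm

lemma trans (hpq : Stable δ p q) (hqr : Stable δ q r) : Stable δ p r := by
  intro u
  obtain ⟨s, hs⟩ := hpq u
  obtain ⟨t, ht⟩ := hqr (u ++ s)
  refine ⟨s ++ t, ?_⟩
  simp only [wordMap_append] at hs ht ⊢
  rw [hs, ht]

lemma syncPair (h : Stable δ p q) : SyncPair δ p q := h []

lemma map_wordMap (h : Stable δ p q) (u : List (Fin k)) :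
    Stable δ (wordMap δ u p) (wordMap δ u q) := fun t => by
  simpa only [wordMap_append] using h (u ++ t)

end Stable

def stableSetoid {V : Type} {k : ℕ} (δ : Fin k → V → V) : Setoid V :=
  ⟨Stable δ, ⟨Stable.refl δ, Stable.symm, Stable.trans⟩⟩

section Synchronization

variable {V : Type} [DecidableEq V] {k : ℕ} (δ : Fin k → V → V)

lemma exists_card_image_wordMap_le_one (P : Finset V)
    (hP : ∀ p ∈ P, ∀ q ∈ P, Stable δ p q) :
    ∃ s, (P.image (wordMap δ s)).card ≤ 1 := by
  induction hn : P.card using Nat.strong_induction_on generalizing P with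
  | _ n ih =>
  by_cases hP1 : P.card ≤ 1
  · exact ⟨[], by rwa [show wordMap δ [] = id from rfl, Finset.image_id]⟩
  obtain ⟨p, hp, q, hq, hpq⟩ := Finset.one_lt_card.mp (not_le.mp hP1)
  obtain ⟨t, ht⟩ := (hP p hp q hq).syncPair
  have hlt : (P.image (wordMap δ t)).card < n := by
    refine hn ▸ lt_of_le_of_ne Finset.card_image_le fun hcard => hpq ?_
    exact Finset.card_image_iff.mp hcard hp hq ht
  obtain ⟨s, hs⟩ := ih _ hlt (P.image (wordMap δ t)) (by
    simp only [Finset.forall_mem_image]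
    exact fun p hp q hq => (hP p hp q hq).map_wordMap t) rfl
  refine ⟨t ++ s, ?_⟩
  rwa [show wordMap δ (t ++ s) = wordMap δ s ∘ wordMap δ t from funext (wordMap_append δ t s),
    ← Finset.image_image]

lemma exists_isSynchronizingWord_of_stable [Fintype V] [Nonempty V] (u : List (Fin k))
    (hu : ∀ x y, Stable δ (wordMap δ u x) (wordMap δ u y)) :
    ∃ s, IsSynchronizingWord δ s := by
  obtain ⟨s, hs⟩ := exists_card_image_wordMap_le_one δ (Finset.univ.image (wordMap δ u))
    (by simpa only [Finset.forall_mem_image, Finset.mem_univ, true_implies] using hu)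
  obtain ⟨v₀⟩ := ‹Nonempty V›
  refine ⟨u ++ s, wordMap δ (u ++ s) v₀, fun v => ?_⟩
  simp only [wordMap_append]
  exact Finset.card_le_one.mp hs _ (by simp) _ (by simp)

end Synchronization

/-- The values of `c` beyond `L` play no role. -/
def IsClosedWalk {X : Type} (E : X → Multiset X) (L : ℕ) (c : ℕ → X) : Prop :=
  (∀ i < L, c (i + 1) ∈ E (c i)) ∧ c L = c 0

namespace IsClosedWalk

variable {X Y : Type} {E : X → Multiset X} {L : ℕ} {c : ℕ → X}

lemma map {E' : Y → Multiset Y} (hc : IsClosedWalk E L c) {π : X → Y}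
    (hπ : ∀ a b, b ∈ E a → π b ∈ E' (π a)) : IsClosedWalk E' L (π ∘ c) :=
  ⟨fun i hi => hπ _ _ (hc.1 i hi), congrArg π hc.2⟩

lemma isCycle_map_range (hc : IsClosedWalk E L c) (hL : 0 < L)
    (hinj : Set.InjOn c (Set.Iio L)) : IsCycle E ((List.range L).map c) := by
  have hne : (List.range L).map c ≠ [] := by simp; omega
  refine ⟨hne, ?_, ?_, ?_⟩
  · refine List.Nodup.map_on (fun i hi j hj hij => hinj ?_ ?_ hij) List.nodup_range <;>
      simp_all
  · refine List.isChain_iff_getElem.mpr fun i hi => ?_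
    simp only [List.length_map, List.length_range] at hi
    simpa using hc.1 i (by omega)
  · simp only [List.head_map, List.head_range, List.getLast_map, List.getLast_range, ← hc.2]
    simpa [Nat.sub_add_cancel hL] using hc.1 (L - 1) (by omega)

/-- A closed walk that is not a cycle splits at a repeated vertex into two shorter closed walks. -/
lemma dvd_length {d : ℕ} (hc : IsClosedWalk E L c) (hL : 0 < L)
    (hcyc : ∀ l, IsCycle E l → d ∣ l.length) : d ∣ L := by
  induction L using Nat.strong_induction_on generalizing c with
  | _ L ih =>
  by_cases hrep : ∃ i j, i < j ∧ j < L ∧ c i = c j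
  · obtain ⟨i, j, hij, hjL, hcij⟩ := hrep
    have hloop : IsClosedWalk E (j - i) (fun t => c (i + t)) := by
      refine ⟨fun t ht => ?_, by simp only [add_zero, Nat.add_sub_cancel' hij.le, hcij]⟩
      simpa only [← add_assoc] using hc.1 (i + t) (by omega)
    have hrest :
        IsClosedWalk E (L - (j - i)) (fun t => if t ≤ i then c t else c (t + (j - i))) := by
      refine ⟨fun t ht => ?_, ?_⟩
      · rcases Nat.lt_trichotomy t i with hti | rfl | hti
        · simpa [hti.le, Nat.succ_le_of_lt hti] using hc.1 t (by omega)
        · simpa [Nat.add_sub_cancel' hij.le, hcij, add_right_comm] using hc.1 j hjL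
        · simpa [(show ¬ t ≤ i by omega), (show ¬ t + 1 ≤ i by omega), add_right_comm]
            using hc.1 (t + (j - i)) (by omega)
      · simp [(show ¬ L - (j - i) ≤ i by omega), Nat.sub_add_cancel (show j - i ≤ L by omega),
          hc.2]
    have h₁ := ih (j - i) (by omega) hloop (by omega)
    have h₂ := ih (L - (j - i)) (by omega) hrest (by omega)
    simpa [Nat.add_sub_cancel' (show j - i ≤ L by omega)] using Nat.dvd_add h₁ h₂
  · have hinj : Set.InjOn c (Set.Iio L) := by
      intro i hi j hj hcij
      by_contra hne
      rcases Nat.lt_or_gt_of_ne hne with h | h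
      · exact hrep ⟨i, j, h, hj, hcij⟩
      · exact hrep ⟨j, i, h, hi, hcij.symm⟩
    simpa using hcyc _ (hc.isCycle_map_range hL hinj)

lemma isPeriodicPt {f : X → X} (hc : IsClosedWalk E L c) (hf : ∀ a b, b ∈ E a → b = f a) :
    Function.IsPeriodicPt f L (c 0) := by
  have hiter : ∀ i ≤ L, c i = f^[i] (c 0) := by
    intro i hi
    induction i with
    | zero => rfl
    | succ i ih => rw [hf _ _ (hc.1 i hi), ih (by omega), Function.iterate_succ_apply']
  exact (hiter L le_rfl).symm.trans hc.2

end IsClosedWalk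

lemma IsCycle.exists_isClosedWalk {X : Type} {E : X → Multiset X} {l : List X}
    (hl : IsCycle E l) : ∃ c, IsClosedWalk E l.length c := by
  obtain ⟨hne, -, hchain, hlast⟩ := hl
  have hpos : 0 < l.length := List.length_pos_iff.mpr hne
  refine ⟨fun i => l.getD i (l.head hne), fun i hi => ?_, ?_⟩
  · rcases Nat.lt_or_ge (i + 1) l.length with h | h
    · simpa [List.getD_eq_getElem, h, hi] using List.isChain_iff_getElem.mp hchain i h
    · dsimp only
      rw [List.getD_eq_default _ _ h, List.getD_eq_getElem _ _ hi]
      simpa [List.getLast_eq_getElem, (show i = l.length - 1 by omega)] using hlast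
  · dsimp only
    rw [List.getD_eq_default _ _ le_rfl, List.getD_eq_getElem _ _ hpos, List.head_eq_getElem]

namespace IsAGW

variable {V : Type} {E : V → Multiset V} {k : ℕ}

lemma subsingleton_of_outdegree_zero (hE : IsAGW E 0) : Subsingleton V := by
  refine ⟨fun u v => ?_⟩
  induction hE.2.1 u v with
  | refl => rfl
  | tail _ hbc => simp [Multiset.card_eq_zero.mp (hE.1 _)] at hbc

/-- With one edge out of each vertex, every cycle length is a period of any fixed vertex `u`
(all vertices lie on one orbit), so aperiodicity makes `u` a fixed point. -/
lemma subsingleton_of_outdegree_one (hE : IsAGW E 1) : Subsingleton V := by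
  choose f hf using fun v => Multiset.card_eq_one.mp (hE.1 v)
  have hmem : ∀ a b, b ∈ E a → b = f a := fun a b hb => by simpa [hf] using hb
  have hreach : ∀ u v, ∃ m, f^[m] u = v := fun u v => by
    induction hE.2.1 u v with
    | refl => exact ⟨0, rfl⟩
    | tail _ hbc ih =>
      obtain ⟨m, rfl⟩ := ih
      exact ⟨m + 1, by rw [Function.iterate_succ_apply', hmem _ _ hbc]⟩
  refine ⟨fun u v => ?_⟩
  have hperiod : ∀ l, IsCycle E l → Function.minimalPeriod f u ∣ l.length := by
    intro l hl
    obtain ⟨c, hc⟩ := hl.exists_isClosedWalk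
    obtain ⟨m, rfl⟩ := hreach (c 0) u
    exact ((hc.isPeriodicPt hmem).apply_iterate m).minimalPeriod_dvd
  have hfix : f u = u := Function.minimalPeriod_eq_one_iff_isFixedPt.mp (hE.2.2 _ hperiod)
  obtain ⟨m, rfl⟩ := hreach u v
  exact (Function.iterate_fixed hfix m).symm

lemma two_le_outdegree [Nontrivial V] (hE : IsAGW E k) : 2 ≤ k := by
  by_contra! hk
  interval_cases k
  · exact not_subsingleton V hE.subsingleton_of_outdegree_zero
  · exact not_subsingleton V hE.subsingleton_of_outdegree_one

end IsAGW

lemma exists_isColoring {V : Type} [Fintype V] {E : V → Multiset V} {k : ℕ}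
    (hE : ∀ v, Multiset.card (E v) = k) : ∃ δ : Fin k → V → V, IsColoring E δ := by
  have hlen : ∀ v, (E v).toList.length = k := fun v => by simp [hE]
  refine ⟨fun a v => (E v).toList[a.cast (hlen v).symm], fun v => ?_⟩
  rw [Fin.univ_val_map]
  conv_rhs => rw [← Multiset.coe_toList (E v)]
  congr 1
  exact List.ext_getElem (by simp [hlen]) fun i h₁ h₂ => by simp

def underlyingGraph {W : Type} {k : ℕ} (δ' : Fin k → W → W) (C : W) : Multiset W :=
  Multiset.map (fun a => δ' a C) Finset.univ.val

lemma IsAGW.underlyingGraph_of_semiconj {V W : Type} [Fintype V] {E : V → Multiset V} {k : ℕ}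
    {δ : Fin k → V → V} {δ' : Fin k → W → W} {π : V → W} (hE : IsAGW E k)
    (hδ : IsColoring E δ) (hsurj : Function.Surjective π) (hπ : ∀ a v, π (δ a v) = δ' a (π v)) :
    IsAGW (underlyingGraph δ') k := by
  have hedge : ∀ a b, b ∈ E a → π b ∈ underlyingGraph δ' (π a) := by
    intro a b hb
    rw [← hδ a] at hb
    obtain ⟨x, -, rfl⟩ := Multiset.mem_map.mp hb
    exact Multiset.mem_map.mpr ⟨x, Finset.mem_univ_val x, (hπ x a).symm⟩
  refine ⟨fun C => by simp [underlyingGraph], fun C D => ?_, fun d hd => hE.2.2 d fun l hl => ?_⟩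
  · obtain ⟨u, rfl⟩ := hsurj C
    obtain ⟨v, rfl⟩ := hsurj D
    exact (hE.2.1 u v).lift π hedge
  · obtain ⟨c, hc⟩ := hl.exists_isClosedWalk
    exact (hc.map hedge).dvd_length (List.length_pos_iff.mpr hl.1) hd

lemma exists_perm_of_map_univ_eq {α X : Type} [Fintype α] {f g : α → X}
    (h : Multiset.map f Finset.univ.val = Multiset.map g Finset.univ.val) :
    ∃ σ : Equiv.Perm α, ∀ a, g (σ a) = f a := by
  classical
  have hfiber : ∀ x, Fintype.card {a // f a = x} = Fintype.card {a // g a = x} := fun x => by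
    simpa [Fintype.card_subtype, Multiset.count_map, Finset.card_def, eq_comm]
      using congrArg (Multiset.count x) h
  exact ⟨Equiv.ofFiberEquiv fun x => Fintype.equivOfCardEq (hfiber x),
    Equiv.ofFiberEquiv_map _⟩

section Recolor

variable {V W : Type} {k : ℕ} {δ : Fin k → V → V} {δ' : Fin k → W → W} {π : V → W}

def recolor (δ : Fin k → V → V) (π : V → W) (σ : W → Equiv.Perm (Fin k)) : Fin k → V → V :=
  fun a v => δ (σ (π v) a) v

lemma IsColoring.recolor [Fintype V] {E : V → Multiset V} (hδ : IsColoring E δ) (π : V → W)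
    (σ : W → Equiv.Perm (Fin k)) : IsColoring E (recolor δ π σ) := fun v => by
  rw [← hδ v]
  conv_rhs => rw [← Multiset.map_univ_val_equiv (σ (π v)), Multiset.map_map]
  rfl

lemma semiconj_recolor {ξ' : Fin k → W → W} {σ : W → Equiv.Perm (Fin k)}
    (hπ : ∀ a v, π (δ a v) = δ' a (π v)) (hσ : ∀ C a, δ' (σ C a) C = ξ' a C) (a : Fin k) (v : V) :
    π (recolor δ π σ a v) = ξ' a (π v) :=
  (hπ _ v).trans (hσ _ a)

lemma exists_wordMap_recolor_eq (hπ : ∀ a v, π (δ a v) = δ' a (π v))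
    (σ : W → Equiv.Perm (Fin k)) (s : List (Fin k)) (C : W) :
    ∃ u, ∀ v, π v = C → wordMap (recolor δ π σ) u v = wordMap δ s v := by
  induction s generalizing C with
  | nil => exact ⟨[], fun _ _ => rfl⟩
  | cons b s ih =>
    obtain ⟨u, hu⟩ := ih (δ' b C)
    refine ⟨(σ C).symm b :: u, fun v hv => ?_⟩
    have hletter : recolor δ π σ ((σ C).symm b) v = δ b v := by
      simp only [recolor, hv, Equiv.apply_symm_apply]
    rw [wordMap_cons, wordMap_cons, hletter, hu _ (by rw [hπ, hv])]

end Recolor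

def HasSynchronizingColoring {V : Type} [Fintype V] (E : V → Multiset V) (k : ℕ) : Prop :=
  ∃ δ : Fin k → V → V, IsColoring E δ ∧ ∃ s, IsSynchronizingWord δ s

lemma hasSynchronizingColoring_of_quotient {V W : Type} [Fintype V] [DecidableEq V]
    [Nonempty V] [Fintype W] {E : V → Multiset V} {k : ℕ} {δ : Fin k → V → V}
    {δ' : Fin k → W → W} {π : V → W} (hδ : IsColoring E δ) (hπ : ∀ a v, π (δ a v) = δ' a (π v))
    (hfiber : ∀ p q, π p = π q → Stable δ p q)
    (hquot : HasSynchronizingColoring (underlyingGraph δ') k) : HasSynchronizingColoring E k := by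
  obtain ⟨ξ', hξ', s', C, hC⟩ := hquot
  choose σ hσ using fun C => exists_perm_of_map_univ_eq (hξ' C)
  have hsync : ∀ p q, π p = π q → SyncPair (recolor δ π σ) p q := by
    intro p q hpq
    obtain ⟨s, hs⟩ := (hfiber p q hpq).syncPair
    obtain ⟨u, hu⟩ := exists_wordMap_recolor_eq hπ σ s (π p)
    exact ⟨u, by rw [hu p rfl, hu q hpq.symm, hs]⟩
  refine ⟨_, hδ.recolor π σ,
    exists_isSynchronizingWord_of_stable _ s' fun x y u => hsync _ _ ?_⟩
  simp only [wordMap_semiconj (semiconj_recolor hπ hσ), hC]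

/-- If every AGW graph with at least two vertices and outdegree `k ≥ 2`
admits a coloring with a stable pair of distinct states, then every AGW graph has a
synchronizing coloring. -/
theorem stable_pair_implies_road_coloring
    (h : ∀ (V : Type) [Fintype V] [DecidableEq V] [Nonempty V]
        (E : V → Multiset V) (k : ℕ), IsAGW E k → 1 < Fintype.card V → 2 ≤ k →
        ∃ δ : Fin k → V → V, IsColoring E δ ∧
          ∃ p q : V, p ≠ q ∧ SyncPair δ p q ∧ Stable δ p q) :
    ∀ (V : Type) [Fintype V] [DecidableEq V] [Nonempty V]
      (E : V → Multiset V) (k : ℕ), IsAGW E k →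
      ∃ δ : Fin k → V → V, IsColoring E δ ∧ ∃ s : List (Fin k), IsSynchronizingWord δ s := by
  intro V _ _
  refine Fintype.induction_subsingleton_or_nontrivial (P := fun V _ => ∀ [Nonempty V]
    (E : V → Multiset V) (k : ℕ), IsAGW E k → HasSynchronizingColoring E k) V ?_ ?_
  · intro V _ _ _ E k hE
    obtain ⟨δ, hδ⟩ := exists_isColoring hE.1
    exact ⟨δ, hδ, [], Classical.arbitrary V, fun _ => Subsingleton.elim _ _⟩
  · intro V _ _ ih _ E k hE
    classical
    obtain ⟨δ, hδ, p, q, hpq, -, hstable⟩ := h V E k hE Fintype.one_lt_card hE.two_le_outdegree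
    let π : V → Quotient (stableSetoid δ) := Quotient.mk _
    let δ' (a : Fin k) : Quotient (stableSetoid δ) → Quotient (stableSetoid δ) :=
      Quotient.map (δ a) fun _ _ hst => hst.map_wordMap [a]
    have hsurj : Function.Surjective π := Quotient.mk_surjective
    have : Nonempty (Quotient (stableSetoid δ)) := ⟨π p⟩
    have hcard : Fintype.card (Quotient (stableSetoid δ)) < Fintype.card V :=
      Fintype.card_lt_of_surjective_not_injective π hsurj
        fun hinj => hpq (hinj (Quotient.sound hstable))
    have hπ : ∀ a v, π (δ a v) = δ' a (π v) := fun _ _ => rfl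
    exact hasSynchronizingColoring_of_quotient hδ hπ (fun _ _ => Quotient.exact)
      (ih _ hcard _ k (hE.underlyingGraph_of_semiconj hδ hsurj hπ))
end

section
/- Let f be a spanning subgraph of an AGW graph and let δ be a coloring such that δ α = f for some letter α ∈ Fin k. Fix n ≥ 0 and a vertex r, and let N be the set of vertices of level n whose root is r (the vertices of level n of one tree of f). Then every F-clique F of the coloring δ satisfies |F ∩ N| ≤ 1. -/
theorem wordMap_replicate {V : Type} {k : ℕ} (δ : Fin k → V → V) (a : Fin k) (n : ℕ) (v : V) :
    wordMap δ (List.replicate n a) v = (δ a)^[n] v := by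
  induction n generalizing v with
  | zero => rfl
  | succ n ih =>
    simp only [List.replicate_succ, wordMap, List.foldl_cons, Function.iterate_succ_apply]
    exact ih (δ a v)

theorem syncPair_of_iterate_eq {V : Type} {k : ℕ} {δ : Fin k → V → V} {a : Fin k} {n : ℕ}
    {p q : V} (h : (δ a)^[n] p = (δ a)^[n] q) : SyncPair δ p q :=
  ⟨List.replicate n a, by rw [wordMap_replicate, wordMap_replicate, h]⟩

theorem IsFClique.card_filter_le_one {V : Type} [Fintype V] [DecidableEq V] {k : ℕ}
    {δ : Fin k → V → V} {F : Finset V} (hF : IsFClique δ F) {P : V → Prop} [DecidablePred P]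
    (hP : ∀ p q, P p → P q → SyncPair δ p q) : (F.filter P).card ≤ 1 := by
  refine Finset.card_le_one.2 fun p hp q hq => ?_
  rw [Finset.mem_filter] at hp hq
  by_contra hpq
  exact hF.2 p hp.1 q hq.1 hpq (hP p q hp.2 hq.2)

theorem FClique_inter_level_card_general {V : Type} [Fintype V] [DecidableEq V]
    (k : ℕ)
    (f : V → V)
    (δ : Fin k → V → V) (α : Fin k) (hα : δ α = f)
    (n : ℕ) (r : V) (F : Finset V) (hF : IsFClique δ F) :
    (F.filter (fun v => level f v = n ∧ root f v = r)).card ≤ 1 := by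
  refine hF.card_filter_le_one fun p q ⟨hp, hpr⟩ ⟨hq, hqr⟩ =>
    syncPair_of_iterate_eq (a := α) (n := n) ?_
  rw [root, hp] at hpr
  rw [root, hq] at hqr
  rw [hα, hpr, hqr]

/-- If the color `α` of a coloring `δ` realizes a spanning subgraph `f`,
then any F-clique meets the set of vertices of level `n` of one tree of `f`
(those with root `r`) in at most one vertex. -/
theorem FClique_inter_level_card {V : Type} [Fintype V] [DecidableEq V] [Nonempty V]
    (E : V → Multiset V) (k : ℕ) (hAGW : IsAGW E k)
    (f : V → V) (hf : IsSpanning E f)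
    (δ : Fin k → V → V) (hδ : IsColoring E δ) (α : Fin k) (hα : δ α = f)
    (n : ℕ) (r : V) (F : Finset V) (hF : IsFClique δ F) :
    (F.filter (fun v => level f v = n ∧ root f v = r)).card ≤ 1 :=
  FClique_inter_level_card_general k f δ α hα n r F hF
end

section
/- If an AGW graph with at least two vertices has a spanning subgraph that is a permutation of V (i.e., consists only of disjoint cycles, with no trees), then it also has a spanning subgraph g whose maximal level L is positive and for which exactly one vertex has level L. -/
/-!
If every edge of the graph followed `f`, strong connectivity would make `f` a
single cycle through all vertices and every directed cycle of the graph would have length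
divisible by its period; aperiodicity then forces a single vertex. So some vertex `v₀` has an
edge to `w ≠ f v₀`. Redirecting `f` at `v₀` to `w` gives a spanning subgraph `g` whose image
misses exactly `p = f v₀`. Every vertex `v ≠ p` has a `g`-preimage, one level higher whenever
`v` is not periodic, so walking backwards from `v` can only stop at `p`; hence `p` is the unique
vertex of maximal level, and that level is positive since `p` is not periodic.
-/

open Function Set

section Level

variable {α : Type} {f : α → α}

lemma level_le_of_iterate_mem_periodicPts {x : α} {m : ℕ} (h : f^[m] x ∈ periodicPts f) :
    level f x ≤ m :=
  Nat.sInf_le h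

variable [Finite α]

lemma exists_iterate_mem_periodicPts (f : α → α) (x : α) :
    ∃ m, f^[m] x ∈ periodicPts f := by
  obtain ⟨m, n, heq, hne⟩ : ∃ m n, f^[m] x = f^[n] x ∧ m ≠ n := by
    simpa [Injective] using not_injective_infinite_finite (f^[·] x)
  wlog hmn : m < n generalizing m n
  · exact this n m heq.symm hne.symm (by omega)
  refine ⟨m, mk_mem_periodicPts (Nat.sub_pos_of_lt hmn) ?_⟩
  rw [IsPeriodicPt, IsFixedPt, ← iterate_add_apply, Nat.sub_add_cancel hmn.le, heq]

lemma iterate_level_mem_periodicPts (f : α → α) (x : α) :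
    f^[level f x] x ∈ periodicPts f :=
  Nat.sInf_mem (exists_iterate_mem_periodicPts f x)

lemma level_eq_zero_iff {x : α} : level f x = 0 ↔ x ∈ periodicPts f :=
  ⟨fun h => by simpa [h] using iterate_level_mem_periodicPts f x,
    fun h => Nat.le_zero.mp (level_le_of_iterate_mem_periodicPts h)⟩

lemma level_apply (x : α) : level f (f x) = level f x - 1 := by
  by_cases hx : x ∈ periodicPts f
  · rw [level_eq_zero_iff.mpr hx, level_eq_zero_iff.mpr ((bijOn_periodicPts f).mapsTo hx)]
  have hpos : 0 < level f x := Nat.pos_of_ne_zero (mt level_eq_zero_iff.mp hx)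
  apply le_antisymm
  · apply level_le_of_iterate_mem_periodicPts
    rw [← iterate_succ_apply, Nat.succ_eq_add_one, Nat.sub_add_cancel hpos]
    exact iterate_level_mem_periodicPts f x
  · have h := iterate_level_mem_periodicPts f (f x)
    rw [← iterate_succ_apply] at h
    have := level_le_of_iterate_mem_periodicPts h
    omega

lemma level_pos_of_notMem_range {p : α} (hp : p ∉ range f) : 0 < level f p :=
  Nat.pos_of_ne_zero fun h => hp (periodicPts_subset_range (level_eq_zero_iff.mp h))

lemma level_lt_of_notMem_range {p : α} (hp : p ∉ range f) (hrange : ∀ v ≠ p, v ∈ range f)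
    {v : α} (hv : v ≠ p) : level f v < level f p := by
  by_contra! hle
  set T := {v | v ≠ p ∧ level f p ≤ level f v}
  obtain ⟨m, ⟨hmp, hml⟩, hmax⟩ :=
    Set.exists_max_image T (level f) (Set.toFinite T) ⟨v, hv, hle⟩
  obtain ⟨u, rfl⟩ := hrange m hmp
  have hlevel := level_apply (f := f) u
  have hpos := level_pos_of_notMem_range hp
  have hup : u ≠ p := by rintro rfl; omega
  have := hmax u ⟨hup, by omega⟩
  omega

end Level

section Functional

variable {V : Type} {E : V → Multiset V} {f : V → V}

lemma exists_iterate_eq_of_reflTransGen (hE : ∀ v, ∀ w ∈ E v, w = f v) {u v : V}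
    (h : Relation.ReflTransGen (fun a b => b ∈ E a) u v) : ∃ n, f^[n] u = v := by
  induction h with
  | refl => exact ⟨0, rfl⟩
  | tail _ hbc ih =>
    obtain ⟨n, rfl⟩ := ih
    exact ⟨n + 1, by rw [iterate_succ_apply', hE _ _ hbc]⟩

lemma IsCycle.exists_isPeriodicPt_length (hE : ∀ v, ∀ w ∈ E v, w = f v) {l : List V}
    (hl : IsCycle E l) : ∃ x, IsPeriodicPt f l.length x := by
  obtain ⟨hne, -, hchain, hclose⟩ := hl
  have hchain' : l.IsChain (fun a b => f a = b) := hchain.imp fun a b h => (hE a b h).symm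
  have hlen : 0 < l.length := List.length_pos_iff.mpr hne
  refine ⟨l[0], ?_⟩
  rw [IsPeriodicPt, IsFixedPt, ← Nat.sub_add_cancel hlen, iterate_succ_apply',
    hchain'.iterate_eq_of_apply_eq _ (by omega), ← List.getLast_eq_getElem hne,
    ← hE _ _ hclose, List.head_eq_getElem]

lemma exists_edge_ne_apply [Fintype V]
    (hconn : ∀ u v : V, Relation.ReflTransGen (fun a b => b ∈ E a) u v)
    (hgcd : ∀ d : ℕ, (∀ l : List V, IsCycle E l → d ∣ l.length) → d = 1)
    (hV : 1 < Fintype.card V) (f : V → V) : ∃ v, ∃ w ∈ E v, w ≠ f v := by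
  by_contra! hE
  obtain ⟨x₀⟩ := Fintype.card_pos_iff.mp (by omega : 0 < Fintype.card V)
  have hreach (v : V) : ∃ n, f^[n] x₀ = v := exists_iterate_eq_of_reflTransGen hE (hconn x₀ v)
  have hx₀ : x₀ ∈ periodicPts f := by
    obtain ⟨n, hn⟩ := exists_iterate_eq_of_reflTransGen hE (hconn (f x₀) x₀)
    exact mk_mem_periodicPts n.succ_pos (by rwa [IsPeriodicPt, IsFixedPt, iterate_succ_apply])
  have hperiod : minimalPeriod f x₀ = 1 := by
    refine hgcd _ fun l hl => ?_
    obtain ⟨x, hx⟩ := hl.exists_isPeriodicPt_length hE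
    obtain ⟨n, rfl⟩ := hreach x
    rw [← minimalPeriod_apply_iterate hx₀ n]
    exact hx.minimalPeriod_dvd
  have hfix : IsFixedPt f x₀ := minimalPeriod_eq_one_iff_isFixedPt.mp hperiod
  have hall (v : V) : v = x₀ := by
    obtain ⟨n, rfl⟩ := hreach v
    exact iterate_fixed hfix n
  have := Fintype.card_le_one_iff.mpr fun a b => (hall a).trans (hall b).symm
  omega

end Functional

lemma Function.Injective.apply_notMem_range_update {α β : Type*} [DecidableEq α] {f : α → β}
    (hf : Injective f) {v : α} {w : β} (hw : w ≠ f v) : f v ∉ range (update f v w) := by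
  rintro ⟨y, hy⟩
  rcases eq_or_ne y v with rfl | hyv
  · exact hw (by simpa using hy)
  · exact hyv (hf (by simpa [hyv] using hy))

lemma Function.Surjective.mem_range_update {α β : Type*} [DecidableEq α] {f : α → β}
    (hf : Surjective f) {v : α} {w : β} {u : β} (hu : u ≠ f v) : u ∈ range (update f v w) := by
  obtain ⟨y, rfl⟩ := hf u
  have hyv : y ≠ v := by rintro rfl; exact hu rfl
  exact ⟨y, update_of_ne hyv w f⟩

theorem exists_spanning_unique_max_level_general {V : Type} [Fintype V]
    (E : V → Multiset V) (k : ℕ) (hAGW : IsAGW E k)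
    (hV : 1 < Fintype.card V)
    (f : V → V) (hf : IsSpanning E f) (hperm : Function.Bijective f) :
    ∃ g : V → V, IsSpanning E g ∧
      ∃ L : ℕ, 0 < L ∧ (∀ v : V, level g v ≤ L) ∧ ∃! v : V, level g v = L := by
  classical
  obtain ⟨v₀, w, hw, hwf⟩ := exists_edge_ne_apply hAGW.2.1 hAGW.2.2 hV f
  set g := update f v₀ w
  have hg : IsSpanning E g := fun u => by
    rcases eq_or_ne u v₀ with rfl | hu
    · simpa [g] using hw
    · simpa [g, hu] using hf u
  have hp : f v₀ ∉ range g := hperm.1.apply_notMem_range_update hwf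
  have hlt {v : V} (hv : v ≠ f v₀) : level g v < level g (f v₀) :=
    level_lt_of_notMem_range hp (fun _ hu => hperm.2.mem_range_update hu) hv
  refine ⟨g, hg, level g (f v₀), level_pos_of_notMem_range hp, fun v => ?_, f v₀, rfl,
    fun v hv => by_contra fun hne => (hlt hne).ne hv⟩
  rcases eq_or_ne v (f v₀) with rfl | hv
  · exact le_rfl
  · exact (hlt hv).le

/-- If an AGW graph with at least two vertices has a spanning subgraph
that is a permutation (only disjoint cycles), then it has a spanning subgraph whose
maximal level `L` is positive and attained by exactly one vertex. -/
theorem exists_spanning_unique_max_level {V : Type} [Fintype V] [DecidableEq V]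
    [Nonempty V] (E : V → Multiset V) (k : ℕ) (hAGW : IsAGW E k)
    (hV : 1 < Fintype.card V)
    (f : V → V) (hf : IsSpanning E f) (hperm : Function.Bijective f) :
    ∃ g : V → V, IsSpanning E g ∧
      ∃ L : ℕ, 0 < L ∧ (∀ v : V, level g v ≤ L) ∧ ∃! v : V, level g v = L :=
  exists_spanning_unique_max_level_general E k hAGW hV f hf hperm
end
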